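/- Let u(x) = Q(|x|)x be a twist map on the planar annulus with Q(r) the rotation by angle g(r), where g ∈ W^{1,2}[a,b], g(a) = 0, g(b) = 2πk. Then 𝔽[u] := (1/2)∫_X |∇u|²/|u|² dx = 2π log(b/a) + π ∫_a^b g'(r)² r dr, and among all such g this is minimized by g(r) = 2πk log(r/a)/log(b/a), with minimum value 2π log(b/a) + 4π³k²/log(b/a). -/

import Mathlib

/-!
In polar coordinates the energy density `(2 + r²g'(r)²)/r²` of the twist map integrates
against `2πr dr` to `2π ∫ (2/r + g'² r)`, which gives the formula for `𝔽[u]`. The lower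
bound is the weighted Cauchy–Schwarz inequality `(∫ g')² ≤ (∫ g'² r)(∫ 1/r)`, with
`∫ g' = g(b) - g(a) = 2πk` and `∫ 1/r = log(b/a)`, obtained by integrating
`2cg' - c²/r ≤ g'² r` with the best constant `c`. Equality holds when `g'` is proportional
to `1/r`, which is the case for the logarithmic profile.
-/

open MeasureTheory Set Real

lemma integral_fun_norm_euclideanSpace_fin_two (f : ℝ → ℝ) :
    ∫ x : EuclideanSpace ℝ (Fin 2), f ‖x‖ = 2 * π * ∫ r in Ioi (0 : ℝ), r * f r := by
  rw [integral_fun_norm_addHaar volume f, finrank_euclideanSpace_fin, measureReal_def,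
    EuclideanSpace.volume_ball_fin_two]
  simp [ENNReal.toReal_ofReal pi_pos.le, mul_assoc]

lemma integral_annulus_fun_norm (f : ℝ → ℝ) {a b : ℝ} (ha : 0 ≤ a) (hab : a ≤ b) :
    ∫ x in {x : EuclideanSpace ℝ (Fin 2) | a < ‖x‖ ∧ ‖x‖ < b}, f ‖x‖ =
      2 * π * ∫ r in a..b, r * f r := by
  change ∫ x in (‖·‖) ⁻¹' Ioo a b, f ‖x‖ = _
  rw [← integral_indicator (measurableSet_Ioo.preimage measurable_norm),
    show ((‖·‖) ⁻¹' Ioo a b).indicator (fun x : EuclideanSpace ℝ (Fin 2) => f ‖x‖) =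
      fun x => (Ioo a b).indicator f ‖x‖ from funext fun _ => indicator_comp_right (g := f) _,
    integral_fun_norm_euclideanSpace_fin_two]
  rw [show (fun r => r * (Ioo a b).indicator f r) = (Ioo a b).indicator (fun r => r * f r) from
      funext fun _ => (indicator_mul_right _ (fun r => r) f).symm,
    integral_indicator measurableSet_Ioo, Measure.restrict_restrict measurableSet_Ioo,
    inter_eq_left.2 (Ioo_subset_Ioi_self.trans (Ioi_subset_Ioi ha)),
    intervalIntegral.integral_of_le hab, integral_Ioc_eq_integral_Ioo]

lemma intervalIntegrable_inv_of_pos {a b : ℝ} (ha : 0 < a) (hab : a ≤ b) :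
    IntervalIntegrable (fun r : ℝ => r⁻¹) volume a b :=
  intervalIntegrable_inv_iff.2 <| .inr fun h => (ha.trans_le (uIcc_of_le hab ▸ h).1).false

lemma integral_annulus_twist_energy_density {a b : ℝ} (ha : 0 < a) (hab : a ≤ b)
    (f : ℝ → ℝ) (hf : IntervalIntegrable (fun r => f r ^ 2 * r) volume a b) :
    (1 / 2) * ∫ x in {x : EuclideanSpace ℝ (Fin 2) | a < ‖x‖ ∧ ‖x‖ < b},
        (2 + ‖x‖ ^ 2 * f ‖x‖ ^ 2) / ‖x‖ ^ 2 =
      2 * π * log (b / a) + π * ∫ r in a..b, f r ^ 2 * r := by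
  have hdensity : EqOn (fun r => r * ((2 + r ^ 2 * f r ^ 2) / r ^ 2))
      (fun r => 2 * r⁻¹ + f r ^ 2 * r) (uIcc a b) := fun r hr => by
    have : r ≠ 0 := (ha.trans_le (uIcc_of_le hab ▸ hr).1).ne'
    field_simp
  rw [integral_annulus_fun_norm (fun r => (2 + r ^ 2 * f r ^ 2) / r ^ 2) ha.le hab,
    intervalIntegral.integral_congr hdensity,
    intervalIntegral.integral_add ((intervalIntegrable_inv_of_pos ha hab).const_mul 2) hf,
    intervalIntegral.integral_const_mul, integral_inv_of_pos ha (ha.trans_le hab)]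
  ring

lemma two_mul_mul_sub_sq_mul_inv_le {x w : ℝ} (c : ℝ) (hw : 0 < w) :
    2 * c * x - c ^ 2 * w⁻¹ ≤ x ^ 2 * w := by
  have hsq : 0 ≤ (x * w - c) ^ 2 / w := by positivity
  have hexpand : (x * w - c) ^ 2 / w = x ^ 2 * w - (2 * c * x - c ^ 2 * w⁻¹) := by
    field_simp
    ring
  linarith

section WeightedCauchySchwarz

variable {f w : ℝ → ℝ} {a b : ℝ}

theorem IntervalIntegrable.of_sq_mul (hab : a ≤ b) (hw : ∀ r ∈ Ioc a b, 0 < w r)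
    (hf : AEStronglyMeasurable f (volume.restrict (Ioc a b)))
    (hfw : IntervalIntegrable (fun r => f r ^ 2 * w r) volume a b)
    (hw' : IntervalIntegrable (fun r => (w r)⁻¹) volume a b) :
    IntervalIntegrable f volume a b := by
  rw [intervalIntegrable_iff_integrableOn_Ioc_of_le hab] at hfw hw' ⊢
  refine (hfw.add hw').mono' hf ((ae_restrict_mem measurableSet_Ioc).mono fun r hr => ?_)
  have := two_mul_mul_sub_sq_mul_inv_le (x := |f r|) 1 (hw r hr)
  rw [sq_abs] at this
  simp only [Pi.add_apply, Real.norm_eq_abs]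
  linarith [abs_nonneg (f r)]

theorem sq_integral_div_le_integral_sq_mul (hab : a ≤ b) (hw : ∀ r ∈ Icc a b, 0 < w r)
    (hf : IntervalIntegrable f volume a b)
    (hfw : IntervalIntegrable (fun r => f r ^ 2 * w r) volume a b)
    (hw' : IntervalIntegrable (fun r => (w r)⁻¹) volume a b) :
    (∫ r in a..b, f r) ^ 2 / (∫ r in a..b, (w r)⁻¹) ≤ ∫ r in a..b, f r ^ 2 * w r := by
  set I := ∫ r in a..b, f r
  set J := ∫ r in a..b, (w r)⁻¹
  -- the optimal constant in `2 c f - c² / w ≤ f² w`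
  set c := I / J
  have hmono := intervalIntegral.integral_mono_on hab
    ((hf.const_mul (2 * c)).sub (hw'.const_mul (c ^ 2))) hfw
    fun r hr => two_mul_mul_sub_sq_mul_inv_le c (hw r hr)
  rw [intervalIntegral.integral_sub (hf.const_mul _) (hw'.const_mul _),
    intervalIntegral.integral_const_mul, intervalIntegral.integral_const_mul] at hmono
  have hc : 2 * c * I - c ^ 2 * J = I ^ 2 / J := by
    rcases eq_or_ne J 0 with hJ | hJ
    · simp [c, hJ]
    · simp only [c]
      field_simp
      ring
  linarith

end WeightedCauchySchwarz

theorem sq_integral_div_log_le_integral_sq_mul_self {f : ℝ → ℝ} {a b : ℝ} (ha : 0 < a)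
    (hab : a ≤ b) (hf : IntervalIntegrable f volume a b)
    (hfr : IntervalIntegrable (fun r => f r ^ 2 * r) volume a b) :
    (∫ r in a..b, f r) ^ 2 / log (b / a) ≤ ∫ r in a..b, f r ^ 2 * r := by
  rw [← integral_inv_of_pos ha (ha.trans_le hab)]
  exact sq_integral_div_le_integral_sq_mul hab (fun r hr => ha.trans_le hr.1) hf hfr
    (intervalIntegrable_inv_of_pos ha hab)

theorem aestronglyMeasurable_of_hasDerivAt {g g' : ℝ → ℝ} {s : Set ℝ} (hs : MeasurableSet s)
    (hg : ∀ r ∈ s, HasDerivAt g (g' r) r) : AEStronglyMeasurable g' (volume.restrict s) :=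
  (measurable_deriv g).aestronglyMeasurable.congr <|
    (ae_restrict_mem hs).mono fun r hr => (hg r hr).deriv

theorem integral_sq_mul_self_eq_of_eqOn_mul_log {g g' : ℝ → ℝ} {a b : ℝ} (ha : 0 < a)
    (hab : a ≤ b) (c : ℝ) (hg : ∀ r ∈ Ioo a b, HasDerivAt g (g' r) r)
    (hgc : EqOn g (fun r => c * log (r / a)) (Ioo a b)) :
    ∫ r in a..b, g' r ^ 2 * r = c ^ 2 * log (b / a) := by
  have hg' : ∀ r ∈ Ioo a b, g' r ^ 2 * r = c ^ 2 * r⁻¹ := fun r hr => by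
    have hr0 : r ≠ 0 := (ha.trans hr.1).ne'
    have hlog : HasDerivAt (fun r => c * log (r / a)) (c * r⁻¹) r := by
      have := (((hasDerivAt_id' r).div_const a).log (div_ne_zero hr0 ha.ne')).const_mul c
      rwa [div_div_div_cancel_right₀ ha.ne', one_div] at this
    rw [(hg r hr).unique (hlog.congr_of_eventuallyEq
      (Filter.eventuallyEq_of_mem (Ioo_mem_nhds hr.1 hr.2) hgc))]
    field_simp
  rw [intervalIntegral.integral_congr_Ioo_of_le hab hg', intervalIntegral.integral_const_mul,
    integral_inv_of_pos ha (ha.trans_le hab)]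

/-- For a planar twist map `u(x) = Q(|x|)x` with `Q(r)` rotation by `g(r)`,
`g ∈ W^{1,2}[a,b]`, `g(a) = 0`, `g(b) = 2πk` (so that `|∇u|² = 2 + r²g'(r)²`
pointwise), the energy satisfies
`𝔽[u] = (1/2)∫_X |∇u|²/|u|² = 2π log(b/a) + π ∫_a^b g'(r)² r dr`;
this is bounded below by `2π log(b/a) + 4π³k²/log(b/a)`, and the bound is
attained when `g(r) = 2πk log(r/a)/log(b/a)`. -/
theorem twist_energy_minimisation {a b : ℝ} (ha : 0 < a) (hab : a < b) (k : ℤ)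
    (g g' : ℝ → ℝ)
    (hg : ∀ r ∈ Set.Icc a b, HasDerivAt g (g' r) r)
    (hga : g a = 0) (hgb : g b = 2 * Real.pi * k)
    (hint : IntervalIntegrable (fun r => (g' r) ^ 2 * r) volume a b) :
    ((1 : ℝ) / 2) * ∫ x in {x : EuclideanSpace ℝ (Fin 2) | a < ‖x‖ ∧ ‖x‖ < b},
        (2 + ‖x‖ ^ 2 * (g' ‖x‖) ^ 2) / ‖x‖ ^ 2 =
      2 * Real.pi * Real.log (b / a) + Real.pi * ∫ r in a..b, (g' r) ^ 2 * r ∧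
    2 * Real.pi * Real.log (b / a) + Real.pi * ∫ r in a..b, (g' r) ^ 2 * r ≥
      2 * Real.pi * Real.log (b / a) +
        4 * Real.pi ^ 3 * (k : ℝ) ^ 2 / Real.log (b / a) ∧
    ((∀ r ∈ Set.Icc a b,
        g r = 2 * Real.pi * k * Real.log (r / a) / Real.log (b / a)) →
      2 * Real.pi * Real.log (b / a) + Real.pi * ∫ r in a..b, (g' r) ^ 2 * r =
        2 * Real.pi * Real.log (b / a) +
          4 * Real.pi ^ 3 * (k : ℝ) ^ 2 / Real.log (b / a)) := by
  have hg'int : IntervalIntegrable g' volume a b :=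
    .of_sq_mul hab.le (fun r hr => ha.trans hr.1)
      (aestronglyMeasurable_of_hasDerivAt measurableSet_Ioc
        fun r hr => hg r (Ioc_subset_Icc_self hr))
      hint (intervalIntegrable_inv_of_pos ha hab.le)
  have hwinding : ∫ r in a..b, g' r = 2 * π * k := by
    rw [intervalIntegral.integral_eq_sub_of_hasDerivAt
      (fun r hr => hg r (uIcc_of_le hab.le ▸ hr)) hg'int, hgb, hga, sub_zero]
  have hCS := sq_integral_div_log_le_integral_sq_mul_self ha hab.le hg'int hint
  rw [hwinding] at hCS
  refine ⟨integral_annulus_twist_energy_density ha hab.le g' hint, ?_, fun hlog => ?_⟩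
  · have : 4 * π ^ 3 * (k : ℝ) ^ 2 / log (b / a) = π * ((2 * π * k) ^ 2 / log (b / a)) := by
      ring
    rw [this]
    gcongr
  · rw [integral_sq_mul_self_eq_of_eqOn_mul_log ha hab.le (2 * π * k / log (b / a))
      (fun r hr => hg r (Ioo_subset_Icc_self hr))
      (fun r hr => (hlog r (Ioo_subset_Icc_self hr)).trans (by ring))]
    have hL : log (b / a) ≠ 0 := (log_pos ((one_lt_div ha).2 hab)).ne'
    field_simp
    ring
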